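/- arXiv:math/0501383 — 2 statements merged into one kernel-verified Lean document; each statement's English description precedes it below -/
import Mathlib

section
/- In any bicategory, a 1-cell t : B → A has a left adjoint if and only if the right Kan extension of the identity 1_B along t exists and is preserved by t; in that case the left adjoint is ran_t(1_B). -/
open CategoryTheory Bicategory

universe w v u

variable {B : Type u} [Bicategory.{w, v} B]

/-- Whiskering (post-composing) a right extension of `g` along `f` with a 1-cell `h : c ⟶ x`;
a right extension of `g` along `f` is preserved by `h` when the whiskered extension is again
a right Kan extension. -/
def rightExtensionWhisker {a b c : B} {f : a ⟶ b} {g : a ⟶ c} (e : RightExtension f g)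
    {x : B} (h : c ⟶ x) : RightExtension f (g ≫ h) :=
  RightExtension.mk (e.extension ≫ h) ((α_ f e.extension h).inv ≫ e.counit ▷ h)

/-!
If `l ⊣ t`, the unit transposes 2-cells `t ≫ k ⟶ g` into 2-cells `k ⟶ l ≫ g`, and the triangle
identities make this transposition inverse to whiskering with `t` followed by the counit. So
`l ≫ g` is a right Kan extension of `g` along `t` for every `g`; taking `g = 𝟙 b` and `g = t`
shows that `l = Ran_t (𝟙 b)` and that `t` preserves it.

Conversely, let `r = Ran_t (𝟙 b)` with counit `ε`, and suppose `r ≫ t = Ran_t t`. The unit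
`η : 𝟙 a ⟶ r ≫ t` is the 2-cell induced by `t ≫ 𝟙 a ≅ 𝟙 b ≫ t`, and its defining property is
the triangle identity for `t`. The one for `r`, an equation between 2-cells into `r`,
follows from the universal property of `r` after whiskering with `t` and composing with `ε`,
where it reduces to the first.
-/

namespace CategoryTheory.Bicategory

open Limits

variable {a b c : B}

def Adjunction.isRightKan {l : a ⟶ b} {t : b ⟶ a} (adj : l ⊣ t) (g : b ⟶ c) :
    RightExtension.IsKan (.mk (l ≫ g) ((α_ t l g).inv ≫ adj.counit ▷ g ≫ (λ_ g).hom)) :=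
  IsTerminal.ofUniqueHom
    (fun (s : RightExtension t g) ↦ RightExtension.homMk
      (𝟙 _ ⊗≫ adj.unit ▷ s.extension ⊗≫ l ◁ s.counit ⊗≫ 𝟙 _ : s.extension ⟶ l ≫ g) <|
      calc _ = t ◁ _ ≫ (α_ t l g).inv ≫ adj.counit ▷ g ≫ (λ_ g).hom := rfl
        _ = 𝟙 _ ⊗≫ t ◁ adj.unit ▷ s.extension ⊗≫
              ((t ≫ l) ◁ s.counit ≫ adj.counit ▷ g) ⊗≫ 𝟙 _ := by
          bicategory
        _ = 𝟙 _ ⊗≫ rightZigzag adj.unit adj.counit ▷ s.extension ⊗≫ 𝟙 b ◁ s.counit ⊗≫ 𝟙 _ := by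
          rw [whisker_exchange, rightZigzag]; bicategory
        _ = s.counit := by
          rw [adj.right_triangle]; bicategory)
    (fun (s : RightExtension t g) τ₀ ↦ by
      ext
      let τ : s.extension ⟶ l ≫ g := τ₀.left
      have hτ : t ◁ τ ≫ (α_ t l g).inv ≫ adj.counit ▷ g ≫ (λ_ g).hom = s.counit :=
        RightExtension.w τ₀
      calc τ
        _ = 𝟙 _ ⊗≫ τ ⊗≫ leftZigzag adj.unit adj.counit ▷ g ⊗≫ 𝟙 _ := by
          rw [adj.left_triangle]; bicategory
        _ = 𝟙 _ ⊗≫ (𝟙 a ◁ τ ≫ adj.unit ▷ (l ≫ g)) ⊗≫ l ◁ adj.counit ▷ g ⊗≫ 𝟙 _ := by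
          rw [leftZigzag]; bicategory
        _ = 𝟙 _ ⊗≫ adj.unit ▷ s.extension ⊗≫
              l ◁ (t ◁ τ ≫ (α_ t l g).inv ≫ adj.counit ▷ g ≫ (λ_ g).hom) ⊗≫ 𝟙 _ := by
          rw [whisker_exchange]; bicategory
        _ = _ := by
          rw [hτ]; rfl)

def Adjunction.isRightKanId {l : a ⟶ b} {t : b ⟶ a} (adj : l ⊣ t) :
    RightExtension.IsKan (.mk l adj.counit) :=
  IsTerminal.ofIso (adj.isRightKan (𝟙 b)) <| CostructuredArrow.isoMk (ρ_ l) <| by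
    change t ◁ (ρ_ l).hom ≫ adj.counit = (α_ t l (𝟙 b)).inv ≫ adj.counit ▷ 𝟙 b ≫ (λ_ (𝟙 b)).hom
    rw [unitors_equal, rightUnitor_naturality, whiskerLeft_rightUnitor, Category.assoc]

def Adjunction.isAbsoluteRightKan {l : a ⟶ b} {t : b ⟶ a} (adj : l ⊣ t) (h : b ⟶ c) :
    RightExtension.IsKan (rightExtensionWhisker (.mk l adj.counit) h) :=
  IsTerminal.ofIso (adj.isRightKan (𝟙 b ≫ h)) <|
    CostructuredArrow.isoMk (whiskerLeftIso l (λ_ h)) <| by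
    change t ◁ l ◁ (λ_ h).hom ≫ (α_ t l h).inv ≫ adj.counit ▷ h =
      (α_ t l (𝟙 b ≫ h)).inv ≫ adj.counit ▷ (𝟙 b ≫ h) ≫ (λ_ (𝟙 b ≫ h)).hom
    calc _
      _ = 𝟙 _ ⊗≫ ((t ≫ l) ◁ (λ_ h).hom ≫ adj.counit ▷ h) ⊗≫ 𝟙 _ := by
        bicategory
      _ = _ := by
        rw [whisker_exchange]; bicategory

def RightExtension.IsKan.adjunction {t : b ⟶ a} {e : RightExtension t (𝟙 b)}
    (H : RightExtension.IsKan e) (H' : RightExtension.IsKan (rightExtensionWhisker e t)) :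
    e.extension ⊣ t :=
  let η : 𝟙 a ⟶ e.extension ≫ t := H'.lift <| RightExtension.mk (𝟙 a) ((ρ_ t).hom ≫ (λ_ t).inv)
  have Hη : rightZigzag η e.counit = (ρ_ t).hom ≫ (λ_ t).inv := by
    have h : t ◁ η ≫ (α_ t e.extension t).inv ≫ e.counit ▷ t = (ρ_ t).hom ≫ (λ_ t).inv :=
      H'.fac _
    simpa [rightZigzag, bicategoricalComp] using h
  { unit := η
    counit := e.counit
    right_triangle := Hη
    left_triangle := by
      apply (cancel_epi (λ_ _).inv).mp
      apply (cancel_mono (ρ_ _).hom).mp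
      apply H.hom_ext
      change t ◁ (((λ_ _).inv ≫ leftZigzag η e.counit) ≫ (ρ_ _).hom) ≫ e.counit =
        t ◁ (((λ_ _).inv ≫ (λ_ _).hom ≫ (ρ_ _).inv) ≫ (ρ_ _).hom) ≫ e.counit
      calc _
        _ = 𝟙 _ ⊗≫ t ◁ η ▷ e.extension ⊗≫
              ((t ≫ e.extension) ◁ e.counit ≫ e.counit ▷ 𝟙 b) ⊗≫ 𝟙 _ := by
          rw [leftZigzag]; bicategory
        _ = 𝟙 _ ⊗≫ rightZigzag η e.counit ▷ e.extension ⊗≫ 𝟙 b ◁ e.counit ⊗≫ 𝟙 _ := by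
          rw [whisker_exchange, rightZigzag]; bicategory
        _ = _ := by
          rw [Hη]; bicategory }

end CategoryTheory.Bicategory

/-- a 1-cell `t : b ⟶ a` has a left adjoint iff the right Kan extension of the
identity `𝟙 b` along `t` exists and is preserved by `t`; in that case the left adjoint is
`ran_t(𝟙 b)`, i.e. the extension 1-cell itself. -/
theorem isRightAdjoint_iff_ranIdPreserved {a b : B} (t : b ⟶ a) :
    (IsRightAdjoint t ↔
      ∃ e : RightExtension t (𝟙 b),
        Nonempty (RightExtension.IsKan e) ∧
          Nonempty (RightExtension.IsKan (rightExtensionWhisker e t))) ∧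
      (∀ e : RightExtension t (𝟙 b),
        Nonempty (RightExtension.IsKan e) →
          Nonempty (RightExtension.IsKan (rightExtensionWhisker e t)) →
            Nonempty (Adjunction e.extension t)) := by
  refine ⟨⟨?_, ?_⟩, fun e ⟨H⟩ ⟨H'⟩ ↦ ⟨H.adjunction H'⟩⟩
  · rintro ⟨⟨l, adj⟩⟩
    exact ⟨.mk l adj.counit, ⟨adj.isRightKanId⟩, ⟨adj.isAbsoluteRightKan t⟩⟩
  · rintro ⟨e, ⟨H⟩, ⟨H'⟩⟩
    exact .mk (H.adjunction H')
end

section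
/- Let B be a small category. Under the Isbell adjunction between [Bᵒᵖ, Type*] and [B, Type*]ᵒᵖ given by φ ↦ Hom(φ, Y−) and ψ ↦ Hom(ψ, Y'−), the unit and counit are isomorphisms at small projective objects; consequently the Isbell adjunction restricts to an equivalence between the full subcategory of small projectives of [Bᵒᵖ, Type*] and the opposite of the full subcategory of small projectives of [B, Type*]. -/
/-!
A small projective presheaf `φ` is a retract of a representable: `Hom(φ, -)` preserves the
canonical presentation of `φ` as a colimit of representables, so `𝟙 φ` factors through one of
its legs. Dually, a small projective copresheaf is a retract of a corepresentable. By the Yoneda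
lemma the Isbell conjugate of a representable is corepresentable and vice versa, and the unit
and counit of the Isbell adjunction are invertible there; both facts pass to retracts, since
small projectives are closed under retracts and invertibility of a component of a natural
transformation passes to retracts through the naturality squares. An adjunction whose unit and
counit are invertible on two full subcategories that it maps into each other restricts to an
equivalence between them.
-/

open CategoryTheory Opposite

universe v

variable {B : Type v} [SmallCategory B]

/-- A presheaf is small projective when its covariant hom-functor preserves all small
colimits. -/
def SmallProjPresheaf (φ : Bᵒᵖ ⥤ Type v) : Prop :=
  Nonempty (Limits.PreservesColimits (coyoneda.obj (op φ)))

/-- A copresheaf is small projective when its covariant hom-functor preserves all small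
colimits. -/
def SmallProjCopresheaf (ψ : B ⥤ Type v) : Prop :=
  Nonempty (Limits.PreservesColimits (coyoneda.obj (op ψ)))

universe w w' v₁ v₂ u₁ u₂

open CategoryTheory.Limits

namespace CategoryTheory

section Retract

variable {C : Type u₁} [Category.{v₁} C] {D : Type u₂} [Category.{v₂} D]
  {J : Type w} [Category.{w'} J] {F G : C ⥤ D}

noncomputable def Retract.retractArrowColimitPost (h : Retract F G) (K : J ⥤ C) [HasColimit K]
    [HasColimit (K ⋙ F)] [HasColimit (K ⋙ G)] :
    RetractArrow (colimit.post K F) (colimit.post K G) where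
  i := Arrow.homMk (colimMap (K.whiskerLeft h.i)) (h.i.app (colimit K))
  r := Arrow.homMk (colimMap (K.whiskerLeft h.r)) (h.r.app (colimit K))
  retract := by
    ext
    · refine colimit.hom_ext fun j => ?_
      simp [← NatTrans.comp_app_assoc]
    · simp [← NatTrans.comp_app]

lemma Retract.preservesColimit (h : Retract F G) (K : J ⥤ C) [HasColimit K]
    [HasColimit (K ⋙ F)] [HasColimit (K ⋙ G)] [PreservesColimit K G] : PreservesColimit K F :=
  have : IsIso (colimit.post K F) :=
    (MorphismProperty.isomorphisms D).of_retract (h.retractArrowColimitPost K)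
      (inferInstance : IsIso (colimit.post K G))
  preservesColimit_of_isIso_post F K

lemma Retract.preservesColimitsOfSize [HasColimitsOfSize.{w, w'} C]
    [HasColimitsOfSize.{w, w'} D] (h : Retract F G) [PreservesColimitsOfSize.{w, w'} G] :
    PreservesColimitsOfSize.{w, w'} F :=
  ⟨⟨h.preservesColimit _⟩⟩

end Retract

section SmallProjective

variable {C : Type u₁} [Category.{v₁} C]

lemma preservesColimits_coyoneda_of_retract [HasColimits C] {X Y : C} (h : Retract X Y)
    [PreservesColimits (coyoneda.obj (op Y))] : PreservesColimits (coyoneda.obj (op X)) :=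
  (h.op.map coyoneda).preservesColimitsOfSize

lemma exists_retract_of_isColimit {J : Type v₁} [SmallCategory J] {K : J ⥤ C} {c : Cocone K}
    (hc : IsColimit c) [PreservesColimit K (coyoneda.obj (op c.pt))] :
    ∃ j, Nonempty (Retract c.pt (K.obj j)) := by
  obtain ⟨j, i, hi⟩ := Types.jointly_surjective_of_isColimit
    (isColimitOfPreserves (coyoneda.obj (op c.pt)) hc) (𝟙 c.pt)
  exact ⟨j, ⟨⟨i, c.ι.app j, hi⟩⟩⟩

end SmallProjective

section Representable

variable {C : Type v₁} [SmallCategory C]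

instance preservesColimits_coyoneda_yoneda (c : C) :
    PreservesColimits (coyoneda.obj (op (yoneda.obj c))) :=
  preservesColimits_of_natIso (curriedYonedaLemma.app (op c)).symm

instance preservesColimits_coyoneda_coyoneda (c : C) :
    PreservesColimits (coyoneda.obj (op (coyoneda.obj (op c)))) :=
  preservesColimits_of_natIso (curriedCoyonedaLemma.app c).symm

lemma exists_retract_yoneda_of_preservesColimits (φ : Cᵒᵖ ⥤ Type v₁)
    [PreservesColimits (coyoneda.obj (op φ))] : ∃ c : C, Nonempty (Retract φ (yoneda.obj c)) := by
  have : PreservesColimit (Presheaf.functorToRepresentables.{v₁} φ)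
      (coyoneda.obj (op (Presheaf.coconeOfRepresentable φ).pt)) :=
    inferInstanceAs (PreservesColimit _ (coyoneda.obj (op φ)))
  obtain ⟨j, ⟨h⟩⟩ := exists_retract_of_isColimit (Presheaf.colimitOfRepresentable.{v₁} φ)
  exact ⟨_, ⟨h.trans (uliftYonedaIsoYoneda.app _).retract⟩⟩

lemma exists_retract_coyoneda_of_preservesColimits (ψ : C ⥤ Type v₁)
    [PreservesColimits (coyoneda.obj (op ψ))] :
    ∃ c : C, Nonempty (Retract ψ (coyoneda.obj (op c))) := by
  let E : (Cᵒᵖᵒᵖ ⥤ Type v₁) ≌ (C ⥤ Type v₁) := (opOpEquivalence C).congrLeft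
  let eHom : coyoneda.obj (op (E.inverse.obj ψ)) ≅ E.functor ⋙ coyoneda.obj (op ψ) :=
    E.symm.toAdjunction.compCoyonedaIso.app (op ψ)
  have : PreservesColimits (coyoneda.obj (op (E.inverse.obj ψ))) :=
    preservesColimits_of_natIso eHom.symm
  obtain ⟨c, ⟨h⟩⟩ := exists_retract_yoneda_of_preservesColimits (E.inverse.obj ψ)
  let eRep : E.functor.obj (yoneda.obj c) ≅ coyoneda.obj c :=
    NatIso.ofComponents fun x => (opEquiv (op x) c).toIso
  exact ⟨c.unop, ⟨(E.counitIso.app ψ).symm.retract.trans ((h.map E.functor).trans eRep.retract)⟩⟩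

end Representable

namespace Adjunction

variable {C : Type u₁} [Category.{v₁} C] {D : Type u₂} [Category.{v₂} D] {L : C ⥤ D} {R : D ⥤ C}
  {P : ObjectProperty C} {Q : ObjectProperty D}

noncomputable def restrictEquivalence (adj : L ⊣ R) (hL : ∀ X, P X → Q (L.obj X))
    (hR : ∀ Y, Q Y → P (R.obj Y)) (hunit : ∀ X, P X → IsIso (adj.unit.app X))
    (hcounit : ∀ Y, Q Y → IsIso (adj.counit.app Y)) :
    P.FullSubcategory ≌ Q.FullSubcategory where
  functor := Q.lift (P.ι ⋙ L) fun X => hL _ X.property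
  inverse := P.lift (Q.ι ⋙ R) fun Y => hR _ Y.property
  unitIso := NatIso.ofComponents
    (fun X => P.isoMk (have := hunit _ X.property; asIso (adj.unit.app X.obj)))
    fun f => by ext; exact adj.unit.naturality f.hom
  counitIso := NatIso.ofComponents
    (fun Y => Q.isoMk (have := hcounit _ Y.property; asIso (adj.counit.app Y.obj)))
    fun f => by ext; exact adj.counit.naturality f.hom
  functor_unitIso_comp X := by ext; exact adj.left_triangle_components X.obj

end Adjunction

end CategoryTheory

/-- Isbell's `O` and `Spec`, `φ ↦ Hom(φ, Y−)` and `ψ ↦ Hom(ψ, Y'−)`, are taken with opposite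
domains so that retracts can be pushed through them with `Retract.map`. -/
def isbellO : (Bᵒᵖ ⥤ Type v)ᵒᵖ ⥤ (B ⥤ Type v) :=
  coyoneda ⋙ (Functor.whiskeringLeft _ _ _).obj yoneda

def isbellSpec : (B ⥤ Type v)ᵒᵖ ⥤ (Bᵒᵖ ⥤ Type v) :=
  coyoneda ⋙ (Functor.whiskeringLeft _ _ _).obj coyoneda

def isbellUnit : 𝟭 (Bᵒᵖ ⥤ Type v) ⟶ isbellO.rightOp ⋙ isbellSpec where
  app φ :=
    { app b := ↾fun x => { app c := ↾fun y => y.app b x }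
      naturality _ _ g := by
        ext x
        refine NatTrans.ext (funext fun c => ?_)
        ext y
        exact NatTrans.naturality_apply y g x }

def isbellCounit : isbellSpec ⋙ isbellO.rightOp ⟶ 𝟭 (B ⥤ Type v)ᵒᵖ where
  app ψ := Quiver.Hom.op
    { app c := ↾fun y => { app b := ↾fun x => x.app c y }
      naturality _ _ f := by
        ext y
        refine NatTrans.ext (funext fun b => ?_)
        ext x
        exact NatTrans.naturality_apply x f y }

def isbellAdjunction : isbellO.rightOp ⊣ isbellSpec (B := B) :=
  Adjunction.mkOfUnitCounit { unit := isbellUnit, counit := isbellCounit }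

def isbellOYonedaIso (b : B) : isbellO.obj (op (yoneda.obj b)) ≅ coyoneda.obj (op b) :=
  Functor.isoWhiskerLeft yoneda (curriedYonedaLemma.app (op b))

def isbellSpecCoyonedaIso (b : B) : isbellSpec.obj (op (coyoneda.obj (op b))) ≅ yoneda.obj b :=
  Functor.isoWhiskerLeft coyoneda (curriedCoyonedaLemma.app b)

lemma isIso_isbellUnit_app_yoneda (b : B) : IsIso (isbellUnit.app (yoneda.obj b)) := by
  suffices ∀ b', IsIso ((isbellUnit.app (yoneda.obj b)).app b') from NatIso.isIso_of_isIso_app _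
  intro b'
  rw [isIso_iff_bijective]
  refine Function.bijective_iff_has_inverse.2 ⟨fun θ => θ.app b (𝟙 _), fun x => rfl, fun θ => ?_⟩
  refine NatTrans.ext (funext fun c => ?_)
  ext y
  obtain ⟨k, rfl⟩ := yoneda.map_surjective y
  exact (NatTrans.naturality_apply θ k (𝟙 (yoneda.obj b))).symm.trans
    (congrArg (fun g => θ.app c g) (Category.id_comp (yoneda.map k)))

lemma isIso_isbellCounit_app_coyoneda (b : B) :
    IsIso (isbellCounit.app (op (coyoneda.obj (op b)))) := by
  rw [← isIso_unop_iff]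
  suffices ∀ c, IsIso ((isbellCounit.app (op (coyoneda.obj (op b)))).unop.app c) from
    NatIso.isIso_of_isIso_app _
  intro c
  rw [isIso_iff_bijective]
  refine Function.bijective_iff_has_inverse.2 ⟨fun σ => σ.app (op b) (𝟙 _), fun y => rfl, fun σ => ?_⟩
  refine NatTrans.ext (funext fun b' => ?_)
  ext x
  obtain ⟨h, rfl⟩ := coyoneda.map_surjective x
  exact (NatTrans.naturality_apply σ h (𝟙 (coyoneda.obj (op b)))).symm.trans
    (congrArg (fun g => σ.app b' g) (Category.id_comp (coyoneda.map h)))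

lemma smallProjCopresheaf_isbellO {φ : Bᵒᵖ ⥤ Type v} (hφ : SmallProjPresheaf φ) :
    SmallProjCopresheaf (isbellO.obj (op φ)) := by
  obtain ⟨_⟩ := hφ
  obtain ⟨b, ⟨h⟩⟩ := exists_retract_yoneda_of_preservesColimits φ
  exact ⟨preservesColimits_coyoneda_of_retract
    ((h.op.map isbellO).trans (isbellOYonedaIso b).retract)⟩

lemma smallProjPresheaf_isbellSpec {ψ : B ⥤ Type v} (hψ : SmallProjCopresheaf ψ) :
    SmallProjPresheaf (isbellSpec.obj (op ψ)) := by
  obtain ⟨_⟩ := hψ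
  obtain ⟨b, ⟨h⟩⟩ := exists_retract_coyoneda_of_preservesColimits ψ
  exact ⟨preservesColimits_coyoneda_of_retract
    ((h.op.map isbellSpec).trans (isbellSpecCoyonedaIso b).retract)⟩

lemma isIso_isbellUnit_app {φ : Bᵒᵖ ⥤ Type v} (hφ : SmallProjPresheaf φ) :
    IsIso (isbellUnit.app φ) := by
  obtain ⟨_⟩ := hφ
  obtain ⟨b, ⟨h⟩⟩ := exists_retract_yoneda_of_preservesColimits φ
  have := isIso_isbellUnit_app_yoneda b
  exact (MorphismProperty.isomorphisms _).of_retract (isbellUnit.retractArrowApp h) this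

lemma isIso_isbellCounit_app {ψ : B ⥤ Type v} (hψ : SmallProjCopresheaf ψ) :
    IsIso (isbellCounit.app (op ψ)) := by
  obtain ⟨_⟩ := hψ
  obtain ⟨b, ⟨h⟩⟩ := exists_retract_coyoneda_of_preservesColimits ψ
  have := isIso_isbellCounit_app_coyoneda b
  exact (MorphismProperty.isomorphisms _).of_retract (isbellCounit.retractArrowApp h.op) this

/-- the Isbell adjunction `φ ↦ Hom(φ, Y−)`, `ψ ↦ Hom(ψ, Y'−)` restricts to an
equivalence between the full subcategory of small projectives of `[Bᵒᵖ, Type v]` and the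
opposite of the full subcategory of small projectives of `[B, Type v]`, both functors of the
equivalence being given by Isbell conjugation. -/
theorem isbell_restricts_to_equivalence_on_smallProjectives :
    ∃ e : ObjectProperty.FullSubcategory (SmallProjPresheaf (B := B)) ≌
        (ObjectProperty.FullSubcategory (SmallProjCopresheaf (B := B)))ᵒᵖ,
      (∀ X : ObjectProperty.FullSubcategory (SmallProjPresheaf (B := B)),
          Nonempty ((e.functor.obj X).unop.obj ≅ yoneda ⋙ coyoneda.obj (op X.obj))) ∧
        (∀ Y : (ObjectProperty.FullSubcategory (SmallProjCopresheaf (B := B)))ᵒᵖ,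
          Nonempty ((e.inverse.obj Y).obj ≅ coyoneda ⋙ coyoneda.obj (op Y.unop.obj))) :=
  ⟨(isbellAdjunction.restrictEquivalence (Q := ObjectProperty.op (SmallProjCopresheaf (B := B)))
      (fun _ => smallProjCopresheaf_isbellO) (fun _ => smallProjPresheaf_isbellSpec)
      (fun _ => isIso_isbellUnit_app) (fun _ => isIso_isbellCounit_app)).trans
    (ObjectProperty.opEquivalence _),
    fun _ => ⟨Iso.refl _⟩, fun _ => ⟨Iso.refl _⟩⟩
end
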